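/- arXiv:1902.03263 — 2 statements merged into one kernel-verified Lean document; each statement's English description precedes it below -/
import Mathlib

section
/- Let N ≥ 1, and let s ≥ 5, j, R be positive integers. For α ≤ 1/(2C) with C a suitable constant depending only on j, R, s, the sum ∑_{m=1}^{⌊αN⌋} binom(N, 2m)² · (4(2j)^R m/(Ns))^{ms} tends to 0 as N → ∞. More precisely, each summand with m ≤ log N is at most C·(log N)^{s−4}/N^{s−4}, and each summand with m > log N is at most (Cα^{s−4})^m, so the total sum is o(1). -/
open Filter Real Finset

/-- `(n+1)^n ≤ 3 n^n` for `n ≥ 1`, via `(1+1/n)^n ≤ e ≤ 3`. -/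
lemma aux_succ_pow_le (n : ℕ) (hn : 1 ≤ n) : ((n : ℝ) + 1) ^ n ≤ 3 * (n : ℝ) ^ n := by
  have hn0 : (0 : ℝ) < n := by exact_mod_cast hn
  have h2 : (1 + 1 / (n : ℝ)) ^ n ≤ Real.exp 1 := by
    calc (1 + 1 / (n : ℝ)) ^ n ≤ (Real.exp (1 / n)) ^ n := by
          apply pow_le_pow_left₀ (by positivity)
          have := Real.add_one_le_exp (1 / (n : ℝ))
          linarith
      _ = Real.exp (n * (1 / n)) := by rw [← Real.exp_nat_mul]
      _ = Real.exp 1 := by rw [mul_one_div, div_self hn0.ne']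
  have h3 : Real.exp 1 ≤ 3 := by
    have := Real.exp_one_lt_d9; linarith
  have hp : (0 : ℝ) < (n : ℝ) ^ n := by positivity
  calc ((n : ℝ) + 1) ^ n = (1 + 1 / n) ^ n * (n : ℝ) ^ n := by
        rw [← mul_pow]; congr 1; field_simp
    _ ≤ 3 * (n : ℝ) ^ n := by nlinarith
  
/-- `n^n ≤ 3^n · n!`. -/
lemma aux_pow_self_le (n : ℕ) : (n : ℝ) ^ n ≤ 3 ^ n * (n.factorial : ℝ) := by
  induction n with
  | zero => simp
  | succ n ih =>
    rcases Nat.eq_zero_or_pos n with h | h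
    · subst h; norm_num
    · have h1 : ((n : ℝ) + 1) ^ n ≤ 3 * (n : ℝ) ^ n := aux_succ_pow_le n h
      have hfac : (0 : ℝ) < (n.factorial : ℝ) := by exact_mod_cast n.factorial_pos
      have hp : (0 : ℝ) ≤ ((n : ℝ) + 1) := by positivity
      calc ((n + 1 : ℕ) : ℝ) ^ (n + 1) = ((n : ℝ) + 1) * ((n : ℝ) + 1) ^ n := by
            push_cast; ring
        _ ≤ ((n : ℝ) + 1) * (3 * (n : ℝ) ^ n) := by nlinarith
        _ ≤ ((n : ℝ) + 1) * (3 * (3 ^ n * (n.factorial : ℝ))) := by nlinarith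
        _ = 3 ^ (n + 1) * (((n + 1) * n.factorial : ℕ) : ℝ) := by push_cast; ring
        _ = 3 ^ (n + 1) * (((n + 1).factorial : ℕ) : ℝ) := by rw [Nat.factorial_succ]

set_option maxHeartbeats 1000000 in
/-- the union-bound sum in the expander argument tends to `0`:
for `α ≤ 1/(2C)` with a suitable constant `C = C(j,R,s)`,
`∑_{m=1}^{⌊αN⌋} binom(N,2m)² (4(2j)^R m/(Ns))^{ms} → 0` as `N → ∞`. -/
theorem stmt_11 (s j R : ℕ) (hs : 5 ≤ s) (hj : 1 ≤ j) (hR : 1 ≤ R) :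
    ∃ C > 0, ∀ α : ℝ, 0 < α → α ≤ 1 / (2 * C) →
      Filter.Tendsto
        (fun N : ℕ => ∑ m ∈ Finset.Icc 1 ⌊α * N⌋₊,
          ((N.choose (2 * m) : ℝ)) ^ 2 *
            ((4 * ((2 * j : ℕ) : ℝ) ^ R * m) / ((N : ℝ) * s)) ^ (m * s))
        Filter.atTop (nhds 0) := by
  classical
  set K : ℝ := ((2 * j : ℕ) : ℝ) ^ R with hKdef
  have hK1 : (1 : ℝ) ≤ K := by
    apply one_le_pow₀
    have : (2 : ℕ) ≤ 2 * j := by omega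
    exact_mod_cast this.trans' (by norm_num)
  have hsR : (0 : ℝ) < s := by
    have : (5 : ℝ) ≤ s := by exact_mod_cast hs
    linarith
  set c : ℝ := (81 / 16) * (4 * K / s) ^ s with hcdef
  have hc0 : 0 < c := by
    have : 0 < 4 * K / s := by positivity
    positivity
  refine ⟨c + 1, by linarith, fun α hα hαC => ?_⟩
  set t := s - 4 with htdef
  have hts : s = 4 + t := by omega
  have ht1 : 1 ≤ t := by omega
  have hα1 : α ≤ 1 / 2 := by
    have h1 : (1 : ℝ) / (2 * (c + 1)) ≤ 1 / 2 := by
      apply one_div_le_one_div_of_le <;> linarith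
    linarith
  -- summability of the dominating series
  have hsum : Summable (fun m : ℕ => (m : ℝ) ^ t * (1 / 2 : ℝ) ^ m) := by
    apply summable_pow_mul_geometric_of_norm_lt_one
    rw [Real.norm_eq_abs, abs_of_pos (by norm_num : (0:ℝ) < 1/2)]; norm_num
  have hsum2 : Summable (fun m : ℕ => 2 * c * ((m : ℝ) ^ t * (1 / 2 : ℝ) ^ m)) :=
    hsum.mul_left _
  set T : ℝ := ∑' m : ℕ, 2 * c * ((m : ℝ) ^ t * (1 / 2 : ℝ) ^ m) with hTdef
  apply squeeze_zero'
  · filter_upwards with N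
    apply Finset.sum_nonneg
    intro m _
    positivity
  · rw [Filter.eventually_atTop]
    refine ⟨1, fun N hN => ?_⟩
    have hN0 : (0 : ℝ) < N := by exact_mod_cast hN
    calc ∑ m ∈ Finset.Icc 1 ⌊α * N⌋₊,
          ((N.choose (2 * m) : ℝ)) ^ 2 * ((4 * K * m) / ((N : ℝ) * s)) ^ (m * s)
        ≤ ∑ m ∈ Finset.Icc 1 ⌊α * N⌋₊,
          (1 / (N : ℝ) ^ t) * (2 * c * ((m : ℝ) ^ t * (1 / 2 : ℝ) ^ m)) := by
          apply Finset.sum_le_sum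
          intro m hm
          rw [Finset.mem_Icc] at hm
          obtain ⟨hm1, hm2⟩ := hm
          have hm0 : (0 : ℝ) < m := by exact_mod_cast hm1
          have hmα : (m : ℝ) ≤ α * N := by
            calc (m : ℝ) ≤ (⌊α * N⌋₊ : ℝ) := by exact_mod_cast hm2
              _ ≤ α * N := Nat.floor_le (by positivity)
          have hmN : (m : ℝ) / N ≤ α := by
            rw [div_le_iff₀ hN0]; linarith
          -- binomial bound
          have hfac : (2 * (m : ℝ)) ^ (2 * m) ≤ 3 ^ (2 * m) * (((2 * m).factorial : ℕ) : ℝ) := by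
            have := aux_pow_self_le (2 * m)
            push_cast at this ⊢
            convert this using 2 <;> push_cast <;> ring
          have hfacpos : (0 : ℝ) < (((2 * m).factorial : ℕ) : ℝ) := by
            exact_mod_cast (2 * m).factorial_pos
          have hch : (N.choose (2 * m) : ℝ) ≤ (3 * (N : ℝ) / (2 * m)) ^ (2 * m) := by
            have h1 : (N.choose (2 * m) : ℝ) ≤ (N : ℝ) ^ (2 * m) / (((2 * m).factorial : ℕ) : ℝ) := by
              have := Nat.choose_le_pow_div (α := ℝ) (2 * m) N
              push_cast at this ⊢
              linarith
            have h2 : (N : ℝ) ^ (2 * m) / (((2 * m).factorial : ℕ) : ℝ)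
                ≤ (3 * (N : ℝ) / (2 * m)) ^ (2 * m) := by
              rw [div_pow, div_le_div_iff₀ hfacpos (by positivity)]
              calc (N : ℝ) ^ (2 * m) * (2 * (m : ℝ)) ^ (2 * m)
                  ≤ (N : ℝ) ^ (2 * m) * (3 ^ (2 * m) * (((2 * m).factorial : ℕ) : ℝ)) := by
                    apply mul_le_mul_of_nonneg_left hfac (by positivity)
                _ = (3 * (N : ℝ)) ^ (2 * m) * (((2 * m).factorial : ℕ) : ℝ) := by
                    rw [mul_pow]; ring
            linarith
          set x : ℝ := (4 * K * m) / ((N : ℝ) * s) with hxdef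
          have hx0 : (0 : ℝ) ≤ x := by positivity
          set A : ℝ := 3 * (N : ℝ) / (2 * m) with hAdef
          have hA0 : (0 : ℝ) ≤ A := by positivity
          have step1 : ((N.choose (2 * m) : ℝ)) ^ 2 * x ^ (m * s)
              ≤ (A ^ (2 * m)) ^ 2 * x ^ (m * s) :=
            mul_le_mul_of_nonneg_right (pow_le_pow_left₀ (Nat.cast_nonneg _) hch 2)
              (by positivity)
          have heq : (A ^ (2 * m)) ^ 2 * x ^ (m * s) = (A ^ 4 * x ^ s) ^ m := by
            rw [mul_pow, ← pow_mul, ← pow_mul, ← pow_mul,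
              show 2 * m * 2 = 4 * m from by ring, show m * s = s * m from by ring]
          have hinner : A ^ 4 * x ^ s = c * ((m : ℝ) / N) ^ t := by
            have hx : x = (4 * K / s) * ((m : ℝ) / N) := by
              rw [hxdef]; field_simp
            have e3 : ((m : ℝ) / N) ^ s = ((m : ℝ) / N) ^ 4 * ((m : ℝ) / N) ^ t := by
              rw [hts, pow_add]
            have e4 : A ^ 4 * ((m : ℝ) / N) ^ 4 = 81 / 16 := by
              rw [← mul_pow, hAdef,
                show 3 * (N : ℝ) / (2 * m) * ((m : ℝ) / N) = 3 / 2 by field_simp]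
              norm_num
            calc A ^ 4 * x ^ s = A ^ 4 * ((4 * K / s) ^ s * (((m : ℝ) / N) ^ 4 * ((m : ℝ) / N) ^ t)) := by
                  rw [hx, mul_pow, e3]
              _ = (A ^ 4 * ((m : ℝ) / N) ^ 4) * ((4 * K / s) ^ s * ((m : ℝ) / N) ^ t) := by ring
              _ = c * ((m : ℝ) / N) ^ t := by rw [e4, hcdef]; ring
          have hhalf : c * ((m : ℝ) / N) ^ t ≤ 1 / 2 := by
            have h1 : ((m : ℝ) / N) ^ t ≤ α ^ t := pow_le_pow_left₀ (by positivity) hmN t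
            have h2 : α ^ t ≤ α := pow_le_of_le_one hα.le (by linarith) (by omega)
            have h4 : (c + 1) * α ≤ 1 / 2 := by
              have h5 : (c + 1) * α ≤ (c + 1) * (1 / (2 * (c + 1))) :=
                mul_le_mul_of_nonneg_left hαC (by linarith)
              have h6 : (c + 1) * (1 / (2 * (c + 1))) = 1 / 2 := by
                field_simp
              linarith
            calc c * ((m : ℝ) / N) ^ t ≤ c * α ^ t :=
                  mul_le_mul_of_nonneg_left h1 hc0.le
              _ ≤ c * α := mul_le_mul_of_nonneg_left h2 hc0.le
              _ ≤ 1 / 2 := by nlinarith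
          have hbase0 : (0 : ℝ) ≤ c * ((m : ℝ) / N) ^ t := by positivity
          obtain ⟨k, rfl⟩ : ∃ k, m = k + 1 := ⟨m - 1, by omega⟩
          have hstep : (c * (((k + 1 : ℕ) : ℝ) / N) ^ t) ^ (k + 1)
              ≤ (1 / (N : ℝ) ^ t) * (2 * c * (((k + 1 : ℕ) : ℝ) ^ t * (1 / 2 : ℝ) ^ (k + 1))) := by
            calc (c * (((k + 1 : ℕ) : ℝ) / N) ^ t) ^ (k + 1)
                = (c * (((k + 1 : ℕ) : ℝ) / N) ^ t) * (c * (((k + 1 : ℕ) : ℝ) / N) ^ t) ^ k := by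
                  rw [pow_succ']
              _ ≤ (c * (((k + 1 : ℕ) : ℝ) / N) ^ t) * (1 / 2 : ℝ) ^ k :=
                  mul_le_mul_of_nonneg_left (pow_le_pow_left₀ hbase0 hhalf k) hbase0
              _ = (1 / (N : ℝ) ^ t) * (2 * c * (((k + 1 : ℕ) : ℝ) ^ t * (1 / 2 : ℝ) ^ (k + 1))) := by
                  rw [div_pow, pow_succ]
                  field_simp
          calc ((N.choose (2 * (k + 1)) : ℝ)) ^ 2 * x ^ ((k + 1) * s)
              ≤ (A ^ (2 * (k + 1))) ^ 2 * x ^ ((k + 1) * s) := step1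
            _ = (A ^ 4 * x ^ s) ^ (k + 1) := heq
            _ = (c * (((k + 1 : ℕ) : ℝ) / N) ^ t) ^ (k + 1) := by rw [hinner]
            _ ≤ (1 / (N : ℝ) ^ t) * (2 * c * (((k + 1 : ℕ) : ℝ) ^ t * (1 / 2 : ℝ) ^ (k + 1))) := hstep
      _ = (1 / (N : ℝ) ^ t) * ∑ m ∈ Finset.Icc 1 ⌊α * N⌋₊,
            (2 * c * ((m : ℝ) ^ t * (1 / 2 : ℝ) ^ m)) := by rw [Finset.mul_sum]
      _ ≤ (1 / (N : ℝ) ^ t) * T := by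
          apply mul_le_mul_of_nonneg_left _ (by positivity)
          exact Summable.sum_le_tsum _ (fun m _ => by positivity) hsum2
      _ = T * (((N : ℝ) ^ t)⁻¹) := by rw [one_div]; ring
  · have h1 : Filter.Tendsto (fun N : ℕ => ((N : ℝ)) ^ t) Filter.atTop Filter.atTop :=
      (tendsto_pow_atTop (by omega : t ≠ 0)).comp tendsto_natCast_atTop_atTop
    have h2 := h1.inv_tendsto_atTop
    have h3 := h2.const_mul T
    rw [mul_zero] at h3
    exact h3
end

section
/- Let μ be a probability distribution on ℕ such that E_{D∼μ}[e^{cD}] = ∞ for all c > 0 (μ is subexponential) and such that μ has infinite support. Then for every ε₀ > 0 there exist infinitely many j with μ([j, 2j]) ≥ e^{−ε₀ j}. -/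
/-- if `μ` is subexponential with infinite support, then for every
`ε₀ > 0` there are infinitely many `j` with `μ([j,2j]) ≥ e^{-ε₀ j}`. -/
theorem stmt_14 (p : ℕ → ℝ) (hp : ∀ k, 0 ≤ p k) (hsum : ∑' k, p k = 1)
    (hsubexp : ∀ c : ℝ, 0 < c → ¬ Summable (fun k : ℕ => Real.exp (c * k) * p k))
    (hsupp : {k : ℕ | p k ≠ 0}.Infinite) :
    ∀ ε₀ : ℝ, 0 < ε₀ → ∀ N : ℕ, ∃ j, N ≤ j ∧
      Real.exp (-(ε₀ * j)) ≤ ∑ k ∈ Finset.Icc j (2 * j), p k := by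
  intro ε₀ hε₀ N
  by_contra h
  push_neg at h
  apply hsubexp (ε₀ / 4) (by positivity)
  rw [← summable_nat_add_iff (2 * N + 2)]
  have hr : Real.exp (-(ε₀ / 4)) < 1 := Real.exp_lt_one_iff.mpr (by linarith)
  have hgeom : Summable (fun k : ℕ => Real.exp (-(ε₀ / 4)) ^ (k + (2 * N + 2))) := by
    have := (summable_geometric_of_lt_one (Real.exp_pos _).le hr).mul_left
      (Real.exp (-(ε₀ / 4)) ^ (2 * N + 2))
    exact this.congr (fun k => by rw [pow_add]; ring)
  refine Summable.of_nonneg_of_le (fun k => mul_nonneg (Real.exp_pos _).le (hp _)) (fun k => ?_) hgeom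
  set m := k + (2 * N + 2) with hm
  have hm2 : 2 * N + 2 ≤ m := by omega
  set j := (m + 1) / 2 with hj
  have hjN : N ≤ j := by omega
  have hmem : m ∈ Finset.Icc j (2 * j) := by
    simp only [Finset.mem_Icc]; omega
  have hle : p m ≤ ∑ i ∈ Finset.Icc j (2 * j), p i :=
    Finset.single_le_sum (fun i _ => hp i) hmem
  have hlt := h j hjN
  have hjk : (m : ℝ) / 2 ≤ (j : ℝ) := by
    have h2 : m ≤ 2 * j := by omega
    have := (Nat.cast_le (α := ℝ)).mpr h2
    push_cast at this
    linarith
  have hpm : p m < Real.exp (-(ε₀ * m / 2)) := by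
    calc p m ≤ _ := hle
      _ < Real.exp (-(ε₀ * j)) := hlt
      _ ≤ Real.exp (-(ε₀ * m / 2)) := by
          apply Real.exp_le_exp.mpr
          nlinarith
  calc Real.exp (ε₀ / 4 * m) * p m
      ≤ Real.exp (ε₀ / 4 * m) * Real.exp (-(ε₀ * m / 2)) :=
        mul_le_mul_of_nonneg_left hpm.le (Real.exp_pos _).le
    _ = Real.exp (-(ε₀ / 4) * m) := by rw [← Real.exp_add]; ring_nf
    _ = Real.exp (-(ε₀ / 4)) ^ m := by
        rw [← Real.exp_nat_mul]; ring_nf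
end
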